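/- arXiv:1712.00135 — 2 statements merged into one kernel-verified Lean document; each statement's English description precedes it below -/
import Mathlib

section
/- (Commutation of the wave operator with e3.) In the linearized setting, for every f ∈ I one has, exactly in B: □(e3(f)) = e3(□f) + κ̄·□f − 2ω·e3(e3(f)) + (κ̄ + 2ω̄)·e4(e3(f)) + ((1/4)κκ̄ − 3ωκ̄ + ω̄κ − 8ωω̄ − ρ − 2ρF² + 2e4(ω̄))·e3(f) + (1/4)κ̄²·e4(f). -/
/-!
Algebraic model of the linearized Einstein–Maxwell system around Reissner–Nordström.
`B = A[ε]/(ε²)` is modeled by the dual numbers `DualNumber A` over a commutative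
`ℝ`-algebra `A`, and the square-zero ideal `I = ε·B` by `smallIdeal A`.
Equality "modulo O(ε²)" is exact equality in `B`; products of two elements of `I` vanish.
-/

noncomputable section

open scoped DualNumber

/-- The square-zero ideal `I = ε·B` of the dual numbers `B = A[ε]/(ε²)`. -/
def smallIdeal (A : Type*) [CommRing A] : Ideal (DualNumber A) :=
  Ideal.span {(DualNumber.eps : DualNumber A)}

/-- The linearized setting: `ℝ`-linear derivations `e3, e4, eθ` on `B = DualNumber A`,
background elements `κ, κ̄, ω, ω̄, ρ, ρF, Z, r` (with `r` and `κ̄` invertible, inverses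
`ir` and `iκ'`), the background transport relations modulo the square-zero ideal `I`,
and the commutator relations valid on every element of `I`. -/
structure RNSetting (A : Type*) [CommRing A] [Algebra ℝ A] where
  e3 : Derivation ℝ (DualNumber A) (DualNumber A)
  e4 : Derivation ℝ (DualNumber A) (DualNumber A)
  eθ : Derivation ℝ (DualNumber A) (DualNumber A)
  κ : DualNumber A
  κ' : DualNumber A
  ω : DualNumber A
  ω' : DualNumber A
  ρ : DualNumber A
  ρF : DualNumber A
  Z : DualNumber A
  r : DualNumber A
  ir : DualNumber A
  iκ' : DualNumber A
  hr : r * ir = 1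
  hκ' : κ' * iκ' = 1
  pres_e3 : ∀ x ∈ smallIdeal A, e3 x ∈ smallIdeal A
  pres_e4 : ∀ x ∈ smallIdeal A, e4 x ∈ smallIdeal A
  pres_eθ : ∀ x ∈ smallIdeal A, eθ x ∈ smallIdeal A
  he3κ' : e3 κ' - (-((1/2 : ℝ) • (κ' * κ')) - 2 * ω' * κ') ∈ smallIdeal A
  he4κ' : e4 κ' - (-((1/2 : ℝ) • (κ * κ')) + 2 * ω * κ' + 2 * ρ) ∈ smallIdeal A
  he3κ : e3 κ - (-((1/2 : ℝ) • (κ * κ')) + 2 * ω' * κ + 2 * ρ) ∈ smallIdeal A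
  he4κ : e4 κ - (-((1/2 : ℝ) • (κ * κ)) - 2 * ω * κ) ∈ smallIdeal A
  hωω' : e3 ω + e4 ω' - (ρ + ρF ^ 2) ∈ smallIdeal A
  he3ρ : e3 ρ - (-((3/2 : ℝ) • (κ' * ρ)) - κ' * ρF ^ 2) ∈ smallIdeal A
  he4ρ : e4 ρ - (-((3/2 : ℝ) • (κ * ρ)) - κ * ρF ^ 2) ∈ smallIdeal A
  he3ρF : e3 ρF - (-(κ' * ρF)) ∈ smallIdeal A
  he4ρF : e4 ρF - (-(κ * ρF)) ∈ smallIdeal A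
  he3r : e3 r - (1/2 : ℝ) • (r * κ') ∈ smallIdeal A
  he4r : e4 r - (1/2 : ℝ) • (r * κ) ∈ smallIdeal A
  he3Z : e3 Z - (-((1/2 : ℝ) • (κ' * Z))) ∈ smallIdeal A
  he4Z : e4 Z - (-((1/2 : ℝ) • (κ * Z))) ∈ smallIdeal A
  heθZ : eθ Z - (ρ + (1/4 : ℝ) • (κ * κ') - ρF ^ 2 - Z ^ 2) ∈ smallIdeal A
  heθκ : eθ κ ∈ smallIdeal A
  heθκ' : eθ κ' ∈ smallIdeal A
  heθω : eθ ω ∈ smallIdeal A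
  heθω' : eθ ω' ∈ smallIdeal A
  heθρ : eθ ρ ∈ smallIdeal A
  heθρF : eθ ρF ∈ smallIdeal A
  heθr : eθ r ∈ smallIdeal A
  commθ3 : ∀ x ∈ smallIdeal A, eθ (e3 x) - e3 (eθ x) = (1/2 : ℝ) • (κ' * eθ x)
  commθ4 : ∀ x ∈ smallIdeal A, eθ (e4 x) - e4 (eθ x) = (1/2 : ℝ) • (κ * eθ x)
  comm34 : ∀ x ∈ smallIdeal A, e3 (e4 x) - e4 (e3 x) = 2 * ω' * e4 x - 2 * ω * e3 x

namespace RNSetting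

variable {A : Type*} [CommRing A] [Algebra ℝ A]

/-- The wave operator
`□u = −e4(e3 u) + eθ(eθ u) − (1/2)κ̄·e4(u) + (−(1/2)κ + 2ω)·e3(u) + Z·eθ(u)`. -/
def box (S : RNSetting A) (u : DualNumber A) : DualNumber A :=
  -S.e4 (S.e3 u) + S.eθ (S.eθ u) - (1/2 : ℝ) • (S.κ' * S.e4 u)
    + (-((1/2 : ℝ) • S.κ) + 2 * S.ω) * S.e3 u + S.Z * S.eθ u

/-- The operator `P̄(u) = r·κ̄⁻¹·e3(u) + (1/2)·r·u`. -/
def Pb (S : RNSetting A) (u : DualNumber A) : DualNumber A :=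
  S.r * S.iκ' * S.e3 u + (1/2 : ℝ) • (S.r * u)

/-- The operator `Q(u) = r·κ̄·e4(u) + (1/2)·r·κ·κ̄·u`. -/
def Qop (S : RNSetting A) (u : DualNumber A) : DualNumber A :=
  S.r * S.κ' * S.e4 u + (1/2 : ℝ) • (S.r * S.κ * S.κ' * u)



set_option linter.unusedSectionVars false

theorem mul_small_eq_zero {x y : DualNumber A} (hx : x ∈ smallIdeal A)
    (hy : y ∈ smallIdeal A) : x * y = 0 := by
  rw [smallIdeal, Ideal.mem_span_singleton] at hx hy
  obtain ⟨a, rfl⟩ := hx; obtain ⟨b, rfl⟩ := hy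
  calc DualNumber.eps * a * (DualNumber.eps * b)
      = DualNumber.eps * DualNumber.eps * (a * b) := by ring
    _ = 0 := by rw [DualNumber.eps_mul_eps, zero_mul]

theorem d_two (D : Derivation ℝ (DualNumber A) (DualNumber A)) : D (2 : DualNumber A) = 0 := by
  rw [show ((2 : DualNumber A)) = ((2 : ℕ) : DualNumber A) by norm_num]
  exact Derivation.map_natCast D 2

/-- Hidden consistency constraint: applying `comm34` to `κ'·z` and using the transport
equations forces `ω·ω'·y = 0` for every `y` in the square-zero ideal. -/
theorem omega_mul_small (S : RNSetting A) {y : DualNumber A} (hy : y ∈ smallIdeal A) :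
    S.ω * S.ω' * y = 0 := by
  have key : ∀ z ∈ smallIdeal A, S.ω * S.ω' * (S.κ' * z) = 0 := by
    intro z hz
    have h1 := S.comm34 (S.κ' * z) (Ideal.mul_mem_left _ _ hz)
    simp only [Derivation.leibniz, map_add, smul_eq_mul] at h1
    have h2 := S.comm34 z hz
    have m4 := S.he4κ'; rw [Algebra.smul_def] at m4
    have m3 := S.he3κ'; rw [Algebra.smul_def] at m3
    have mk := S.he3κ; rw [Algebra.smul_def] at mk
    have mρ := S.he3ρ; rw [Algebra.smul_def] at mρ
    have sA : (S.e3 (S.e4 S.κ') - S.e3 (-(algebraMap ℝ (DualNumber A) (1/2) * (S.κ * S.κ'))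
        + 2 * S.ω * S.κ' + 2 * S.ρ)) * z = 0 := by
      have m' := S.pres_e3 _ m4
      rw [map_sub] at m'
      exact mul_small_eq_zero m' hz
    have sB : (S.e4 (S.e3 S.κ') - S.e4 (-(algebraMap ℝ (DualNumber A) (1/2) * (S.κ' * S.κ'))
        - 2 * S.ω' * S.κ')) * z = 0 := by
      have m' := S.pres_e4 _ m3
      rw [map_sub] at m'
      exact mul_small_eq_zero m' hz
    have sC := mul_small_eq_zero m4 hz
    have sD := mul_small_eq_zero m3 hz
    have sE := mul_small_eq_zero mk hz
    have sF := mul_small_eq_zero mρ hz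
    have sH := mul_small_eq_zero S.hωω' hz
    simp only [map_add, map_sub, map_neg, Derivation.leibniz, smul_eq_mul,
      Derivation.map_algebraMap, d_two, mul_zero, zero_mul, add_zero, zero_add] at sA sB
    have hh : (2 : DualNumber A) * algebraMap ℝ (DualNumber A) (1/2) = 1 := by
      rw [show (2 : DualNumber A) = algebraMap ℝ (DualNumber A) 2 from (map_ofNat _ 2).symm,
        ← map_mul]
      norm_num
    have hh32 : (2 : DualNumber A) * algebraMap ℝ (DualNumber A) (3/2) = 3 := by
      rw [show (2 : DualNumber A) = algebraMap ℝ (DualNumber A) 2 from (map_ofNat _ 2).symm,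
        ← map_mul,
        show (3 : DualNumber A) = algebraMap ℝ (DualNumber A) 3 from (map_ofNat _ 3).symm]
      norm_num
    set H := algebraMap ℝ (DualNumber A) (1/2) with hH
    set Q := H * H * H with hQ
    linear_combination (-Q) * h1 + (Q * S.κ') * h2 + Q * sA - Q * sB
      + (2 * Q * H * S.κ') * sC + (-(Q * H * S.κ) + 4 * Q * S.ω) * sD
      + (-(Q * H * S.κ')) * sE + 2 * Q * sF + (2 * Q * S.κ') * sH
      + (-(Q * S.κ' * S.ρ * z)) * hh32
      + (Q * S.κ' * S.ρ * z - 4 * H * H * S.κ' * S.ω * S.ω' * z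
          - 2 * H * S.κ' * S.ω * S.ω' * z - S.κ' * S.ω * S.ω' * z) * hh
  have e : S.κ' * (S.iκ' * y) = y := by rw [← mul_assoc, S.hκ', one_mul]
  have h := key (S.iκ' * y) (Ideal.mul_mem_left _ _ hy)
  rw [e] at h
  exact h

/-- commutation of the wave operator with `e3` on elements of `I`. -/
theorem box_comm_e3 (S : RNSetting A) (f : DualNumber A) (hf : f ∈ smallIdeal A) :
    S.box (S.e3 f)
      = S.e3 (S.box f) + S.κ' * S.box f - 2 * S.ω * S.e3 (S.e3 f)
        + (S.κ' + 2 * S.ω') * S.e4 (S.e3 f)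
        + ((1/4 : ℝ) • (S.κ * S.κ') - 3 * (S.ω * S.κ') + S.ω' * S.κ - 8 * (S.ω * S.ω')
            - S.ρ - 2 * S.ρF ^ 2 + 2 * S.e4 S.ω') * S.e3 f
        + (1/4 : ℝ) • (S.κ' ^ 2 * S.e4 f) := by
  have hf3 := S.pres_e3 f hf
  have hf4 := S.pres_e4 f hf
  have hfθ := S.pres_eθ f hf
  have h1 := S.comm34 (S.e3 f) hf3
  have h2 := S.commθ3 f hf
  have h3 := S.commθ3 (S.eθ f) hfθ
  have h4 := S.comm34 f hf
  rw [Algebra.smul_def] at h2 h3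
  have m3 := S.he3κ'; rw [Algebra.smul_def] at m3
  have mk := S.he3κ; rw [Algebra.smul_def] at mk
  have mZ := S.he3Z; rw [Algebra.smul_def] at mZ
  have e5 := mul_small_eq_zero m3 hf4
  have e6 := mul_small_eq_zero mZ hfθ
  have e7 := mul_small_eq_zero mk hf3
  have e8 := mul_small_eq_zero S.hωω' hf3
  have e9 := mul_small_eq_zero S.heθκ' hfθ
  have W := S.omega_mul_small hf3
  have h2' : S.eθ (S.e3 f)
      = S.e3 (S.eθ f) + algebraMap ℝ (DualNumber A) (1/2) * (S.κ' * S.eθ f) := by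
    linear_combination h2
  have hB : S.eθ (S.eθ (S.e3 f))
      = S.eθ (S.e3 (S.eθ f)) + algebraMap ℝ (DualNumber A) (1/2)
          * (S.κ' * S.eθ (S.eθ f) + S.eθ f * S.eθ S.κ') := by
    rw [h2', map_add]
    simp only [Derivation.leibniz, smul_eq_mul, Derivation.map_algebraMap, mul_zero, add_zero]

  have hh : (2 : DualNumber A) * algebraMap ℝ (DualNumber A) (1/2) = 1 := by
    rw [show (2 : DualNumber A) = algebraMap ℝ (DualNumber A) 2 from (map_ofNat _ 2).symm,
      ← map_mul]
    norm_num
  have q4 : algebraMap ℝ (DualNumber A) (1/4)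
      = algebraMap ℝ (DualNumber A) (1/2) * algebraMap ℝ (DualNumber A) (1/2) := by
    rw [← map_mul]; norm_num
  simp only [box, Algebra.smul_def]
  rw [q4]
  simp only [map_add, map_sub, map_neg, Derivation.leibniz, smul_eq_mul,
    Derivation.map_algebraMap, d_two, mul_zero, zero_mul, add_zero, zero_add]
  set H := algebraMap ℝ (DualNumber A) (1/2) with hH
  linear_combination hB + h3 + h1 + S.Z * h2 + (H * S.κ') * h4 + H * e5 - e6 + H * e7
    - 2 * e8 + H * e9 + 8 * W
    + (-(H * S.κ * S.κ' * S.e3 f) - H * S.κ' * S.κ' * S.e4 f + S.Z * S.κ' * S.eθ f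
        + S.κ * S.ω' * S.e3 f - S.κ' * S.ω * S.e3 f + S.κ' * S.eθ (S.eθ f)
        + S.ρ * S.e3 f) * hh

end RNSetting
end
end

section
/- (Commutation of the wave operator with eθ.) In the linearized setting, for every f ∈ I one has, exactly in B: □(eθ(f)) − eθ(□f) = (1/2)κ·e3(eθ(f)) + (1/2)κ̄·e4(eθ(f)) + (ρF² + Z² + (1/4)κκ̄)·eθ(f). -/
/-!
Algebraic model of the linearized Einstein–Maxwell system around Reissner–Nordström.
`B = A[ε]/(ε²)` is modeled by the dual numbers `DualNumber A` over a commutative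
`ℝ`-algebra `A`, and the square-zero ideal `I = ε·B` by `smallIdeal A`.
Equality "modulo O(ε²)" is exact equality in `B`; products of two elements of `I` vanish.
-/

noncomputable section

open scoped DualNumber

lemma smallIdeal_mul {A : Type*} [CommRing A] {x y : DualNumber A}
    (hx : x ∈ smallIdeal A) (hy : y ∈ smallIdeal A) : x * y = 0 := by
  rw [smallIdeal, Ideal.mem_span_singleton] at hx hy
  obtain ⟨a, rfl⟩ := hx; obtain ⟨b, rfl⟩ := hy
  linear_combination a * b * (DualNumber.eps_mul_eps (R := A))

namespace RNSetting

variable {A : Type*} [CommRing A] [Algebra ℝ A]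

/-- commutation of the wave operator with `eθ` on elements of `I`. -/
theorem box_comm_eθ (S : RNSetting A) (f : DualNumber A) (hf : f ∈ smallIdeal A) :
    S.box (S.eθ f) - S.eθ (S.box f)
      = (1/2 : ℝ) • (S.κ * S.e3 (S.eθ f)) + (1/2 : ℝ) • (S.κ' * S.e4 (S.eθ f))
        + (S.ρF ^ 2 + S.Z ^ 2 + (1/4 : ℝ) • (S.κ * S.κ')) * S.eθ f := by
  have hg := S.pres_eθ f hf
  have h3 := S.pres_e3 f hf
  have h4 := S.pres_e4 f hf
  have E1 := S.commθ3 f hf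
  have E2 := S.commθ4 f hf
  have E3 := S.commθ4 _ h3
  have E4 := congrArg S.e4 E1
  have Z1 := smallIdeal_mul S.he4κ' hg
  have Z2 := smallIdeal_mul S.heθκ' h4
  have Z3 := smallIdeal_mul S.heθκ h3
  have Z4 := smallIdeal_mul S.heθω h3
  have Z5 := smallIdeal_mul S.heθZ hg
  have hone : (2 : DualNumber A) * algebraMap ℝ (DualNumber A) (1/2) = 1 := by
    rw [← map_ofNat (algebraMap ℝ (DualNumber A)) 2, ← map_mul]
    norm_num
  have h14 : algebraMap ℝ (DualNumber A) (1/4)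
      = algebraMap ℝ (DualNumber A) (1/2) * algebraMap ℝ (DualNumber A) (1/2) := by
    rw [← map_mul]; norm_num
  simp only [box, two_mul, map_add, map_sub, map_neg, map_smul, Derivation.leibniz,
    smul_eq_mul, Algebra.smul_def, Derivation.map_algebraMap, mul_zero, zero_mul, add_zero, zero_add] at E1 E2 E3 E4 Z1 Z5 ⊢
  set c : DualNumber A := algebraMap ℝ (DualNumber A) (1/2) with hcdef
  linear_combination (norm := ring_nf) E3 + E4 + (2*c*S.κ - 2*S.ω) * E1 + (c*S.κ') * E2
    + c * Z2 + c * Z3 - 2 * Z4 + c * Z1 + Z5 - 2 * Z5 + (S.ρ * S.eθ f) * hone - 2 * (S.κ * S.κ' * S.eθ f) * h14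

end RNSetting
end
end
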